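/- arXiv:1812.09463 — 3 statements merged into one kernel-verified Lean document; each statement's English description precedes it below -/
import Mathlib

section
/- Suppose a packet generated at time S is delivered at time t under two schedulers. Let Δ ∈ ℝ^m be the sorted (descending) age vector before delivery under the Maximum-Age-First (MAF) strategy, which updates to Δ' with Δ'_[i] = Δ_[i+1] for i = 1,…,m−1 and Δ'_[m] = t − S. Let Λ ∈ ℝ^m be the sorted age vector before delivery under an arbitrary strategy, which updates to some Λ' satisfying Λ'_[i] ≥ Λ_[i+1] for i = 1,…,m−1 and Λ'_[m] = t − S. If Δ_[i] ≤ Λ_[i] for all i = 1,…,m, then Δ'_[i] ≤ Λ'_[i] for all i = 1,…,m. -/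
/-- Inductive comparison lemma for MAF: if the pre-delivery sorted age vector under MAF is
componentwise at most that under an arbitrary scheduler, then the same holds after the delivery
of a packet generated at time S and delivered at time t.  Ages are indexed 1,…,m, sorted
descending. -/
theorem maf_inductive_comparison
    (m : ℕ) (hm : 1 ≤ m) (S t : ℝ)
    (Δ Λ Δ' Λ' : ℕ → ℝ)
    (hΔ' : ∀ i, 1 ≤ i → i ≤ m - 1 → Δ' i = Δ (i + 1))
    (hΔ'm : Δ' m = t - S)
    (hΛ' : ∀ i, 1 ≤ i → i ≤ m - 1 → Λ (i + 1) ≤ Λ' i)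
    (hΛ'm : Λ' m = t - S)
    (hle : ∀ i, 1 ≤ i → i ≤ m → Δ i ≤ Λ i) :
    ∀ i, 1 ≤ i → i ≤ m → Δ' i ≤ Λ' i := by
  intro i hi him
  rcases eq_or_lt_of_le him with rfl | hlt
  · rw [hΔ'm, hΛ'm]
  · have h1 : i ≤ m - 1 := Nat.le_sub_one_of_lt hlt
    rw [hΔ' i hi h1]
    exact le_trans (hle (i + 1) (by omega) (by omega)) (hΛ' i hi h1)
end

section
/- In the MAF-scheduled m-source system, the age at the (i−1)-th delivery of the source scheduled for the i-th transmission (for i > m) equals the sum of the last m service times and the last m−1 waiting times: a_{r_i,(i−1)} = Σ_{k=1}^{m} Y_{i−k} + Σ_{k=2}^{m} Z_{i−k}. -/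
lemma maf_tel (Y Z D : ℕ → ℝ)
    (hD : ∀ i, D (i + 1) = D i + Z i + Y (i + 1)) :
    ∀ n a, D (a + n) - D a = ∑ k ∈ Finset.range n, (Z (a + k) + Y (a + k + 1)) := by
  intro n a
  induction n with
  | zero => simp
  | succ n ih =>
    rw [Finset.sum_range_succ, ← ih, show a + (n + 1) = (a + n) + 1 from rfl, hD (a + n)]
    ring

/-- Under the MAF scheduler with m sources, for i > m the age at the (i−1)-th delivery of the
source scheduled for the i-th transmission, namely D_{i−1} − D_{i−m} + Y_{i−m}, equals
Σ_{k=1}^{m} Y_{i−k} + Σ_{k=2}^{m} Z_{i−k}. -/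
theorem maf_age_in_terms_of_service_and_waiting
    (m : ℕ) (hm : 1 ≤ m) (Y Z D : ℕ → ℝ)
    (hD0 : D 0 = 0)
    (hD : ∀ i, D (i + 1) = D i + Z i + Y (i + 1)) :
    ∀ i, m < i →
      D (i - 1) - D (i - m) + Y (i - m) =
        (∑ k ∈ Finset.Icc 1 m, Y (i - k)) + ∑ k ∈ Finset.Icc 2 m, Z (i - k) := by
  intro i hi
  set a := i - m with ha
  have h1 : i - 1 = a + (m - 1) := by omega
  rw [h1, maf_tel Y Z D hD (m - 1) a, Finset.sum_add_distrib]
  -- reindex RHS sums to range sums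
  have hY : (∑ k ∈ Finset.Icc 1 m, Y (i - k)) = ∑ j ∈ Finset.range m, Y (a + j) := by
    rw [← Finset.Ico_add_one_right_eq_Icc, Finset.sum_Ico_eq_sum_range,
      show m + 1 - 1 = m from rfl, ← Finset.sum_range_reflect]
    apply Finset.sum_congr rfl
    intro j hj
    simp only [Finset.mem_range] at hj
    congr 1
    omega
  have hZ : (∑ k ∈ Finset.Icc 2 m, Z (i - k)) = ∑ j ∈ Finset.range (m - 1), Z (a + j) := by
    rw [← Finset.Ico_add_one_right_eq_Icc, Finset.sum_Ico_eq_sum_range,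
      show m + 1 - 2 = m - 1 by omega, ← Finset.sum_range_reflect]
    apply Finset.sum_congr rfl
    intro j hj
    simp only [Finset.mem_range] at hj
    congr 1
    omega
  rw [hY, hZ]
  have hY2 : (∑ j ∈ Finset.range m, Y (a + j))
      = Y a + ∑ k ∈ Finset.range (m - 1), Y (a + k + 1) := by
    obtain ⟨n, rfl⟩ : ∃ n, m = n + 1 := ⟨m - 1, by omega⟩
    rw [Finset.sum_range_succ']
    simp only [show (n + 1) - 1 = n from rfl, ← Nat.add_assoc, Nat.add_zero]
    exact add_comm _ _
  rw [hY2]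
  ring
end

section
/- For the m-source MAF transition dynamics, after m consecutive transitions with waiting times z₁,…,z_m and service times y₁,…,y_m, the resulting state is independent of the initial state: the final sorted age vector equals (y_m + z_m + y_{m−1} + z_{m−1} + … + z₂ + y₁, …, y_m + z_m + y_{m−1}, y_m); i.e., the l-th largest component is y_m + Σ_{k=l}^{m−1}(z_{k+1} + y_k) for l = 1,…,m. Hence every state of this form is reachable from any initial state in m steps. -/
/-- m-step flush of the MAF dynamics: after m consecutive transitions with waiting times
z₁,…,z_m and service times y₁,…,y_m, the resulting sorted age vector is independent of the
initial state; its l-th largest component (l zero-indexed) equals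
y_m + Σ_{k=l+1}^{m−1}(z_{k+1} + y_k). -/
theorem maf_m_step_reachability
    (m : ℕ) (z y : ℕ → ℝ)
    (step : (Fin m → ℝ) → ℝ → ℝ → (Fin m → ℝ))
    (hstep : ∀ (a : Fin m → ℝ) (zz yy : ℝ) (l : Fin m),
      step a zz yy l = if h : l.val + 1 < m then a ⟨l.val + 1, h⟩ + zz + yy else yy)
    (a₀ : Fin m → ℝ)
    (A : ℕ → Fin m → ℝ)
    (hA0 : A 0 = a₀)
    (hAsucc : ∀ k, A (k + 1) = step (A k) (z (k + 1)) (y (k + 1))) :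
    ∀ l : Fin m, A m l = y m + ∑ k ∈ Finset.Icc (l.val + 1) (m - 1), (z (k + 1) + y k) := by
  have key : ∀ d j : ℕ, d < j → j ≤ m → ∀ l : Fin m, (l : ℕ) = m - 1 - d →
      A j l = y (j - d) + ∑ k ∈ Finset.Icc (j - d + 1) j, (z k + y k) := by
    intro d
    induction d with
    | zero =>
      intro j hdj hjm l hl
      obtain ⟨j', rfl⟩ : ∃ j', j = j' + 1 := ⟨j - 1, by omega⟩
      rw [hAsucc, hstep]
      have hlm := l.isLt
      have hnot : ¬ ((l : ℕ) + 1 < m) := by omega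
      rw [dif_neg hnot]
      have he : Finset.Icc (j' + 1 - 0 + 1) (j' + 1) = ∅ := by
        apply Finset.Icc_eq_empty; omega
      simp [he]
    | succ d ih =>
      intro j hdj hjm l hl
      obtain ⟨j', rfl⟩ : ∃ j', j = j' + 1 := ⟨j - 1, by omega⟩
      rw [hAsucc, hstep]
      have hlm := l.isLt
      have hlt : (l : ℕ) + 1 < m := by omega
      rw [dif_pos hlt]
      have hl' : ((⟨(l : ℕ) + 1, hlt⟩ : Fin m) : ℕ) = m - 1 - d := by simp; omega
      rw [ih j' (by omega) (by omega) _ hl']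
      have h1 : j' + 1 - (d + 1) = j' - d := by omega
      have h2 : Finset.Icc (j' - d + 1) (j' + 1)
          = insert (j' + 1) (Finset.Icc (j' - d + 1) j') := by
        ext x; simp [Finset.mem_Icc]; omega
      have h3 : (j' + 1) ∉ Finset.Icc (j' - d + 1) j' := by
        simp [Finset.mem_Icc]
      rw [h1, h2, Finset.sum_insert h3]
      ring
  intro l
  have hlm := l.isLt
  have hd := key (m - 1 - (l : ℕ)) m (by omega) le_rfl l (by omega)
  have h1 : m - (m - 1 - (l : ℕ)) = (l : ℕ) + 1 := by omega
  rw [h1] at hd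
  rw [hd]
  -- Now show: y (l+1) + ∑_{Icc (l+2) m} (z k + y k) = y m + ∑_{Icc (l+1) (m-1)} (z (k+1) + y k)
  by_cases hcase : (l : ℕ) + 1 = m
  · have he1 : Finset.Icc ((l : ℕ) + 1 + 1) m = ∅ := Finset.Icc_eq_empty (by omega)
    have he2 : Finset.Icc ((l : ℕ) + 1) (m - 1) = ∅ := Finset.Icc_eq_empty (by omega)
    rw [he1, he2, hcase]; simp
  · have hlt : (l : ℕ) + 2 ≤ m := by omega
    -- shift the RHS sum
    have shift : ∀ f : ℕ → ℝ, ∑ k ∈ Finset.Icc ((l : ℕ) + 1) (m - 1), f (k + 1)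
        = ∑ k ∈ Finset.Icc ((l : ℕ) + 2) m, f k := by
      intro f
      have := Finset.sum_map (Finset.Icc ((l : ℕ) + 1) (m - 1))
        (addRightEmbedding 1) f
      rw [Finset.map_add_right_Icc] at this
      simp only [addRightEmbedding_apply] at this
      rw [← this]
      have hm : m - 1 + 1 = m := by omega
      rw [hm]
    have hsplit : ∑ k ∈ Finset.Icc ((l : ℕ) + 1) (m - 1), (z (k + 1) + y k)
        = (∑ k ∈ Finset.Icc ((l : ℕ) + 2) m, z k)
          + ∑ k ∈ Finset.Icc ((l : ℕ) + 1) (m - 1), y k := by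
      rw [Finset.sum_add_distrib, shift z]
    have hsplit2 : ∑ k ∈ Finset.Icc ((l : ℕ) + 2) m, (z k + y k)
        = (∑ k ∈ Finset.Icc ((l : ℕ) + 2) m, z k)
          + ∑ k ∈ Finset.Icc ((l : ℕ) + 2) m, y k := Finset.sum_add_distrib
    rw [hsplit, hsplit2]
    have hy : y ((l : ℕ) + 1) + ∑ k ∈ Finset.Icc ((l : ℕ) + 2) m, y k
        = y m + ∑ k ∈ Finset.Icc ((l : ℕ) + 1) (m - 1), y k := by
      have hL : Finset.Icc ((l : ℕ) + 1) m
          = insert ((l : ℕ) + 1) (Finset.Icc ((l : ℕ) + 2) m) := by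
        ext x; simp [Finset.mem_Icc]; omega
      have hLn : ((l : ℕ) + 1) ∉ Finset.Icc ((l : ℕ) + 2) m := by
        simp [Finset.mem_Icc]
      have hR : Finset.Icc ((l : ℕ) + 1) m
          = insert m (Finset.Icc ((l : ℕ) + 1) (m - 1)) := by
        ext x; simp [Finset.mem_Icc]; omega
      have hRn : m ∉ Finset.Icc ((l : ℕ) + 1) (m - 1) := by
        simp [Finset.mem_Icc]; omega
      have := congrArg (fun s => ∑ k ∈ s, y k) (hL.symm.trans hR)
      simpa [Finset.sum_insert hLn, Finset.sum_insert hRn] using this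
    linarith [hy]
end
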